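/- With notation as above, setting v = Σ_{j=1}^6 e_j × (∇_{e_j}ξ), the invariant i₁₅(∇Φ) = Σ_{i,j}(∇_{e_i}Φ)(φe_i,ξ)·(∇_{e_j}Φ)(e_j,ξ) equals -div(ξ)·g(ξ, v). -/

import Mathlib

/-!
The summand splits into a factor depending on `i` and one depending on `j`, so `i₁₅` is a product
of two sums. Since `ξ × ξ = 0`, `(∇ₓΦ)(y, ξ) = -⟪y, ξ × ∇ₓξ⟫`. Because `φ = ξ × ·` is an isometry
of `ξ^⊥` whose square is `-1`, the first factor is `-Σᵢ ⟪∇_{eᵢ}ξ, eᵢ⟫`, which is `-div ξ` as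
`∇_ξ ξ ⊥ ξ` for the unit field `ξ`; the alternating property of `⟪·, · × ·⟫` turns the second
factor into `⟪ξ, v⟫`.
-/

open scoped RealInnerProductSpace

theorem cross_self_eq_zero {V : Type*} [AddCommGroup V] [Module ℝ V] {cross : V → V → V}
    (hanti : ∀ x y : V, cross x y = - cross y x) (x : V) :
    cross x x = 0 := by
  have h := hanti x x
  rwa [eq_neg_iff_add_eq_zero, ← two_smul ℝ, smul_eq_zero, or_iff_right two_ne_zero] at h

section CrossProduct

variable {V : Type*} [NormedAddCommGroup V] [InnerProductSpace ℝ V] {cross : V → V → V}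

theorem inner_cross_right_comm (hanti : ∀ x y : V, cross x y = - cross y x)
    (hskew : ∀ x y z : V, ⟪cross x y, z⟫ = - ⟪cross x z, y⟫) (x y z : V) :
    ⟪x, cross y z⟫ = - ⟪y, cross x z⟫ := by
  rw [real_inner_comm, hskew, hanti y x, inner_neg_left, neg_neg, hskew x y z,
    real_inner_comm (cross x z) y]

theorem inner_cross_cross (hskew : ∀ x y z : V, ⟪cross x y, z⟫ = - ⟪cross x z, y⟫) {ξ : V}
    (hdouble : ∀ x : V, cross ξ (cross ξ x) = -x + ⟪ξ, x⟫ • ξ) (x y : V) :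
    ⟪cross ξ x, cross ξ y⟫ = ⟪x, y⟫ - ⟪ξ, x⟫ * ⟪ξ, y⟫ := by
  rw [hskew, hdouble, inner_add_left, inner_neg_left, real_inner_smul_left,
    real_inner_comm x y]
  ring

end CrossProduct

theorem inner_nabla_self_eq_zero {V : Type*} [NormedAddCommGroup V] [InnerProductSpace ℝ V]
    {nabla : V → V → V} {D : V → ℝ → ℝ} (hD1 : ∀ x, D x 1 = 0)
    (hDg : ∀ x y z : V, D x ⟪y, z⟫ = ⟪nabla x y, z⟫ + ⟪y, nabla x z⟫)
    {ξ : V} (hξ : ‖ξ‖ = 1) (x : V) :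
    ⟪nabla x ξ, ξ⟫ = 0 := by
  have h := hDg x ξ ξ
  rw [real_inner_self_eq_norm_sq, hξ, one_pow, hD1, real_inner_comm (nabla x ξ) ξ] at h
  linarith

/-- With notation as in Statement 7 and `v = Σ_j e_j × (∇_{e_j}ξ)`,
the invariant `i₁₅(∇Φ) = Σ_{i,j}(∇_{e_i}Φ)(φe_i,ξ)·(∇_{e_j}Φ)(e_j,ξ)` equals
`-div(ξ)·g(ξ, v)`. -/
theorem i15_eq
    {V : Type*} [NormedAddCommGroup V] [InnerProductSpace ℝ V]
    (cross : V → V → V)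
    (hanti : ∀ x y : V, cross x y = - cross y x)
    (hskew : ∀ x y z : V, ⟪cross x y, z⟫ = - ⟪cross x z, y⟫)
    (nabla : V → V → V) (D : V → ℝ → ℝ)
    (hD0 : ∀ x, D x 0 = 0) (hD1 : ∀ x, D x 1 = 0)
    (hDg : ∀ x y z : V, D x ⟪y, z⟫ = ⟪nabla x y, z⟫ + ⟪y, nabla x z⟫)
    (ξ : V) (e : Fin 6 → V)
    (hON : Orthonormal ℝ (Fin.snoc e ξ : Fin 7 → V))
    (hdouble : ∀ x : V, cross ξ (cross ξ x) = -x + ⟪ξ, x⟫ • ξ)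
    (Φ : V → V → ℝ) (hΦ : ∀ x y, Φ x y = ⟪x, cross ξ y⟫)
    (nablaPhi : V → V → V → ℝ)
    (hnablaPhi : ∀ x y z, nablaPhi x y z
      = D x (Φ y z) - Φ (nabla x y) z - Φ y (nabla x z))
    (divξ : ℝ)
    (hdiv : divξ = (∑ i : Fin 6, ⟪nabla (e i) ξ, e i⟫) + ⟪nabla ξ ξ, ξ⟫)
    (v : V) (hv : v = ∑ j : Fin 6, cross (e j) (nabla (e j) ξ)) :
    ∑ i : Fin 6, ∑ j : Fin 6,
        nablaPhi (e i) (cross ξ (e i)) ξ * nablaPhi (e j) (e j) ξ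
      = - divξ * ⟪ξ, v⟫ := by
  have hξ : ‖ξ‖ = 1 := by simpa only [Fin.snoc_last] using hON.1 (Fin.last 6)
  have hξe (i : Fin 6) : ⟪ξ, e i⟫ = 0 := by
    simpa only [Fin.snoc_last, Fin.snoc_castSucc] using hON.2 (Fin.castSucc_lt_last i).ne'
  have hnablaPhi_ξ (x y : V) : nablaPhi x y ξ = - ⟪y, cross ξ (nabla x ξ)⟫ := by
    rw [hnablaPhi, hΦ, hΦ, hΦ, cross_self_eq_zero hanti, inner_zero_right, inner_zero_right, hD0]
    ring
  have hfirst : ∑ i, nablaPhi (e i) (cross ξ (e i)) ξ = - divξ := by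
    simp only [hnablaPhi_ξ, inner_cross_cross hskew hdouble, hξe, zero_mul, sub_zero, hdiv,
      inner_nabla_self_eq_zero hD1 hDg hξ, add_zero, Finset.sum_neg_distrib, real_inner_comm]
  have hsecond : ∑ j, nablaPhi (e j) (e j) ξ = ⟪ξ, v⟫ := by
    simp only [hv, inner_sum, hnablaPhi_ξ, inner_cross_right_comm hanti hskew ξ]
  rw [← Finset.sum_mul_sum, hfirst, hsecond]
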